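/- arXiv:2101.01540 — 6 statements merged into one kernel-verified Lean document; each statement's English description precedes it below -/
import Mathlib

section
/- Let R be a commutative G-graded ring with nonzero unity and I a graded ideal of R that is graded radically principal, i.e., Grad(I) = Grad(⟨a⟩) for some homogeneous a ∈ R. Then there exists a homogeneous element c ∈ I such that Grad(I) = Grad(⟨c⟩). -/
open DirectSum

variable {G A : Type*} [AddGroup G] [DecidableEq G] [CommRing A]

def gradedRadical (𝒜 : G → AddSubgroup A) [GradedRing 𝒜] (I : Ideal A) : Set A :=
  {x | ∀ g : G, ∃ n : ℕ, ((DirectSum.decompose 𝒜 x g : A)) ^ n ∈ I}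

def IsGradedRadicallyPrincipal (𝒜 : G → AddSubgroup A) [GradedRing 𝒜] (I : Ideal A) : Prop :=
  ∃ c : A, SetLike.IsHomogeneousElem 𝒜 c ∧ gradedRadical 𝒜 I = gradedRadical 𝒜 (Ideal.span {c})

def GradedRadicallyPrincipalRing (𝒜 : G → AddSubgroup A) [GradedRing 𝒜] : Prop :=
  ∀ I : Ideal A, I.IsHomogeneous 𝒜 → IsGradedRadicallyPrincipal 𝒜 I

def IsGradedPrime (𝒜 : G → AddSubgroup A) [GradedRing 𝒜] (P : Ideal A) : Prop :=
  P ≠ ⊤ ∧ P.IsHomogeneous 𝒜 ∧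
    ∀ ⦃x y : A⦄, SetLike.IsHomogeneousElem 𝒜 x → SetLike.IsHomogeneousElem 𝒜 y → x * y ∈ P →
      x ∈ P ∨ y ∈ P

/-!
If `Grad I = Grad ⟨a⟩` with `a` homogeneous, then `a ∈ Grad I`, so `a ^ n ∈ I` for some `n`;
the homogeneous element `c = a ^ (n + 1)` lies in `I`, and `⟨c⟩` has the same radical as `⟨a⟩`.
-/

section GradedRadical

variable (𝒜 : G → AddSubgroup A) [GradedRing 𝒜]

theorem gradedRadical_eq_setOf_mem_radical (I : Ideal A) :
    gradedRadical 𝒜 I = {x | ∀ g : G, (decompose 𝒜 x g : A) ∈ I.radical} :=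
  rfl

theorem gradedRadical_eq_of_radical_eq {I J : Ideal A} (h : I.radical = J.radical) :
    gradedRadical 𝒜 I = gradedRadical 𝒜 J := by
  simp only [gradedRadical_eq_setOf_mem_radical, h]

variable {𝒜}

theorem SetLike.IsHomogeneousElem.mem_gradedRadical_iff {a : A}
    (ha : SetLike.IsHomogeneousElem 𝒜 a) (I : Ideal A) :
    a ∈ gradedRadical 𝒜 I ↔ ∃ n : ℕ, a ^ n ∈ I := by
  obtain ⟨i, hi⟩ := ha
  constructor
  · intro hrad
    simpa only [decompose_of_mem_same 𝒜 hi] using hrad i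
  · rintro ⟨n, hn⟩ g
    by_cases hgi : g = i
    · subst hgi
      exact ⟨n, by rwa [decompose_of_mem_same 𝒜 hi]⟩
    · exact ⟨1, by simp [decompose_of_mem_ne 𝒜 hi (Ne.symm hgi)]⟩

end GradedRadical

theorem stmt_0_general (𝒜 : G → AddSubgroup A) [GradedRing 𝒜] (I : Ideal A)
    (h : IsGradedRadicallyPrincipal 𝒜 I) :
    ∃ c : A, c ∈ I ∧ SetLike.IsHomogeneousElem 𝒜 c ∧
      gradedRadical 𝒜 I = gradedRadical 𝒜 (Ideal.span {c}) := by
  obtain ⟨a, ha, hrad⟩ := h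
  obtain ⟨i, hi⟩ := id ha
  have ha_mem : a ∈ gradedRadical 𝒜 I := by
    rw [hrad, ha.mem_gradedRadical_iff]
    exact ⟨1, by simp⟩
  obtain ⟨n, hn⟩ := (ha.mem_gradedRadical_iff I).1 ha_mem
  refine ⟨a ^ (n + 1), ?_, ⟨(n + 1) • i, SetLike.pow_mem_graded _ hi⟩,
    hrad.trans (gradedRadical_eq_of_radical_eq 𝒜 ?_)⟩
  · rw [pow_succ]
    exact I.mul_mem_right a hn
  · rw [← Ideal.span_singleton_pow, Ideal.radical_pow _ n.succ_ne_zero]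

theorem stmt_0 (𝒜 : G → AddSubgroup A) [GradedRing 𝒜] (I : Ideal A)
    (hI : I.IsHomogeneous 𝒜) (h : IsGradedRadicallyPrincipal 𝒜 I) :
    ∃ c : A, c ∈ I ∧ SetLike.IsHomogeneousElem 𝒜 c ∧
      gradedRadical 𝒜 I = gradedRadical 𝒜 (Ideal.span {c}) :=
  stmt_0_general 𝒜 I h
end

section
/- Let R be a commutative G-graded ring and I, J graded radically principal ideals of R. Then the product IJ is a graded radically principal ideal of R. -/
open DirectSum

variable {G A : Type*} [AddGroup G] [DecidableEq G] [CommRing A]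

lemma gradedRadical_mul (𝒜 : G → AddSubgroup A) [GradedRing 𝒜] (I J : Ideal A) :
    gradedRadical 𝒜 (I * J) = gradedRadical 𝒜 I ∩ gradedRadical 𝒜 J := by
  ext x
  constructor
  · intro hx
    refine ⟨fun g => ?_, fun g => ?_⟩ <;> obtain ⟨n, hn⟩ := hx g
    exacts [⟨n, Ideal.mul_le_left hn⟩, ⟨n, Ideal.mul_le_right hn⟩]
  · rintro ⟨hxI, hxJ⟩ g
    obtain ⟨n, hn⟩ := hxI g
    obtain ⟨m, hm⟩ := hxJ g
    exact ⟨n + m, pow_add (decompose 𝒜 x g : A) n m ▸ Ideal.mul_mem_mul hn hm⟩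

lemma IsGradedRadicallyPrincipal.mul {𝒜 : G → AddSubgroup A} [GradedRing 𝒜] {I J : Ideal A}
    (hI : IsGradedRadicallyPrincipal 𝒜 I) (hJ : IsGradedRadicallyPrincipal 𝒜 J) :
    IsGradedRadicallyPrincipal 𝒜 (I * J) := by
  obtain ⟨c, hc, hcI⟩ := hI
  obtain ⟨d, hd, hdJ⟩ := hJ
  refine ⟨c * d, hc.mul hd, ?_⟩
  rw [gradedRadical_mul, hcI, hdJ, ← Ideal.span_singleton_mul_span_singleton, gradedRadical_mul]

theorem stmt_2 (𝒜 : G → AddSubgroup A) [GradedRing 𝒜] (I J : Ideal A)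
    (hI : I.IsHomogeneous 𝒜) (hJ : J.IsHomogeneous 𝒜)
    (hI' : IsGradedRadicallyPrincipal 𝒜 I) (hJ' : IsGradedRadicallyPrincipal 𝒜 J) :
    (I * J).IsHomogeneous 𝒜 ∧ IsGradedRadicallyPrincipal 𝒜 (I * J) :=
  ⟨hI.mul hJ, hI'.mul hJ'⟩
end

section
/- Let R be a commutative G-graded ring and I, J graded ideals of R. Then Grad(IJ) = Grad(I ∩ J) = Grad(I) ∩ Grad(J). -/
open DirectSum

variable {G A : Type*} [AddGroup G] [DecidableEq G] [CommRing A]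

/-! The graded radical only sees `I` through its ordinary radical, so both identities follow
from `√(IJ) = √(I ∩ J) = √I ∩ √J`. -/

section gradedRadical

variable (𝒜 : G → AddSubgroup A) [GradedRing 𝒜] {I J : Ideal A}

theorem mem_gradedRadical_iff {x : A} :
    x ∈ gradedRadical 𝒜 I ↔ ∀ g : G, (decompose 𝒜 x g : A) ∈ I.radical :=
  Iff.rfl

theorem gradedRadical_congr_radical (h : I.radical = J.radical) :
    gradedRadical 𝒜 I = gradedRadical 𝒜 J := by
  ext x
  simp only [mem_gradedRadical_iff, h]

theorem gradedRadical_inf (I J : Ideal A) :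
    gradedRadical 𝒜 (I ⊓ J) = gradedRadical 𝒜 I ∩ gradedRadical 𝒜 J := by
  ext x
  simp only [Set.mem_inter_iff, mem_gradedRadical_iff, Ideal.radical_inf, Ideal.mem_inf,
    forall_and]

end gradedRadical

theorem stmt_4_general (𝒜 : G → AddSubgroup A) [GradedRing 𝒜] (I J : Ideal A) :
    gradedRadical 𝒜 (I * J) = gradedRadical 𝒜 (I ⊓ J) ∧
      gradedRadical 𝒜 (I ⊓ J) = gradedRadical 𝒜 I ∩ gradedRadical 𝒜 J :=
  ⟨gradedRadical_congr_radical 𝒜 (by rw [Ideal.radical_mul, Ideal.radical_inf]),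
    gradedRadical_inf 𝒜 I J⟩

theorem stmt_4 (𝒜 : G → AddSubgroup A) [GradedRing 𝒜] (I J : Ideal A)
    (hI : I.IsHomogeneous 𝒜) (hJ : J.IsHomogeneous 𝒜) :
    gradedRadical 𝒜 (I * J) = gradedRadical 𝒜 (I ⊓ J) ∧
      gradedRadical 𝒜 (I ⊓ J) = gradedRadical 𝒜 I ∩ gradedRadical 𝒜 J :=
  stmt_4_general 𝒜 I J
end

section
/- Let R be a commutative G-graded ring. Then R is graded radically principal if and only if every graded prime ideal of R is graded radically principal. -/
open DirectSum

variable {G A : Type*} [AddGroup G] [DecidableEq G] [CommRing A]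

/-! This is Cohen's argument for graded radicals. By Zorn's lemma (a witness `c` for the union
of a chain has a power in one member of the chain), a homogeneous ideal that is not graded radically
principal lies in a maximal such ideal `P`. If homogeneous `x, y ∉ P` had `x * y ∈ P`, then
`J = P + (y)` and `K = (P : y)` would be strictly larger homogeneous ideals with witnesses `c` and
`d`, and `J * K ≤ P ≤ J ⊓ K` makes `c * d` a witness for `P`. So `P` is graded prime. -/

section GradedRadical

variable (𝒜 : G → AddSubgroup A) [GradedRing 𝒜]

lemma gradedRadical_mono {I J : Ideal A} (h : I ≤ J) :
    gradedRadical 𝒜 I ⊆ gradedRadical 𝒜 J :=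
  fun _ hx g => (hx g).imp fun _ hn => h hn

lemma mem_gradedRadical_iff_of_isHomogeneousElem {c : A} (hc : SetLike.IsHomogeneousElem 𝒜 c)
    {I : Ideal A} : c ∈ gradedRadical 𝒜 I ↔ ∃ n : ℕ, c ^ n ∈ I := by
  obtain ⟨i, hi⟩ := hc
  constructor
  · intro h
    simpa only [decompose_of_mem_same 𝒜 hi] using h i
  · rintro ⟨n, hn⟩ g
    by_cases hg : g = i
    · subst hg
      exact ⟨n, by rwa [decompose_of_mem_same 𝒜 hi]⟩
    · exact ⟨1, by simp [decompose_of_mem_ne 𝒜 hi (Ne.symm hg)]⟩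

lemma gradedRadical_span_singleton_subset {c : A} {N : ℕ} {I : Ideal A} (hN : c ^ N ∈ I) :
    gradedRadical 𝒜 (Ideal.span {c}) ⊆ gradedRadical 𝒜 I := by
  intro x hx g
  obtain ⟨n, hn⟩ := hx g
  obtain ⟨e, he⟩ := pow_dvd_pow_of_dvd (Ideal.mem_span_singleton.1 hn) N
  exact ⟨n * N, by rw [pow_mul, he]; exact I.mul_mem_right e hN⟩

lemma gradedRadical_span_singleton_inter_subset (c d : A) :
    gradedRadical 𝒜 (Ideal.span {c}) ∩ gradedRadical 𝒜 (Ideal.span {d}) ⊆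
      gradedRadical 𝒜 (Ideal.span {c * d}) := by
  rintro x ⟨hc, hd⟩ g
  obtain ⟨a, ha⟩ := hc g
  obtain ⟨b, hb⟩ := hd g
  rw [Ideal.mem_span_singleton] at ha hb
  exact ⟨a + b, Ideal.mem_span_singleton.2 (by rw [pow_add]; exact mul_dvd_mul ha hb)⟩

lemma isGradedRadicallyPrincipal_iff {I : Ideal A} :
    IsGradedRadicallyPrincipal 𝒜 I ↔ ∃ c : A, SetLike.IsHomogeneousElem 𝒜 c ∧
      (∃ n : ℕ, c ^ n ∈ I) ∧ gradedRadical 𝒜 I ⊆ gradedRadical 𝒜 (Ideal.span {c}) := by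
  constructor
  · rintro ⟨c, hc, hI⟩
    have hc_mem : c ∈ gradedRadical 𝒜 (Ideal.span {c}) :=
      (mem_gradedRadical_iff_of_isHomogeneousElem 𝒜 hc).2 ⟨1, by simp⟩
    exact ⟨c, hc, (mem_gradedRadical_iff_of_isHomogeneousElem 𝒜 hc).1 (hI ▸ hc_mem), hI.le⟩
  · rintro ⟨c, hc, ⟨n, hn⟩, hI⟩
    exact ⟨c, hc, hI.antisymm (gradedRadical_span_singleton_subset 𝒜 hn)⟩

lemma isGradedRadicallyPrincipal_top : IsGradedRadicallyPrincipal 𝒜 ⊤ :=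
  ⟨1, SetLike.isHomogeneousElem_one 𝒜, by rw [Ideal.span_singleton_one]⟩

lemma Ideal.IsHomogeneous.colon_span_singleton {P : Ideal A} (hP : P.IsHomogeneous 𝒜) {y : A}
    (hy : SetLike.IsHomogeneousElem 𝒜 y) : (P.colon (Ideal.span {y})).IsHomogeneous 𝒜 := by
  obtain ⟨d, hd⟩ := hy
  intro g r hr
  rw [Ideal.mem_colon_span_singleton] at hr ⊢
  simpa only [coe_decompose_mul_add_of_right_mem 𝒜 hd] using hP (g + d) hr

end GradedRadical

section CohenTheorem

variable {𝒜 : G → AddSubgroup A} [GradedRing 𝒜]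

lemma IsGradedRadicallyPrincipal.of_mul_le {J K P : Ideal A}
    (hJ : IsGradedRadicallyPrincipal 𝒜 J) (hK : IsGradedRadicallyPrincipal 𝒜 K)
    (hJK : J * K ≤ P) (hPJ : P ≤ J) (hPK : P ≤ K) : IsGradedRadicallyPrincipal 𝒜 P := by
  obtain ⟨c, hc, ⟨n, hn⟩, hJc⟩ := (isGradedRadicallyPrincipal_iff 𝒜).1 hJ
  obtain ⟨d, hd, ⟨m, hm⟩, hKd⟩ := (isGradedRadicallyPrincipal_iff 𝒜).1 hK
  have hcd : (c * d) ^ (n + m) ∈ P := by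
    rw [mul_pow]
    exact hJK (Ideal.mul_mem_mul (J.pow_mem_of_pow_mem hn (by omega))
      (K.pow_mem_of_pow_mem hm (by omega)))
  refine (isGradedRadicallyPrincipal_iff 𝒜).2 ⟨c * d, hc.mul hd, ⟨n + m, hcd⟩, ?_⟩
  exact fun x hx => gradedRadical_span_singleton_inter_subset 𝒜 c d
    ⟨hJc (gradedRadical_mono 𝒜 hPJ hx), hKd (gradedRadical_mono 𝒜 hPK hx)⟩

lemma exists_maximal_not_isGradedRadicallyPrincipal {I : Ideal A} (hI : I.IsHomogeneous 𝒜)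
    (hI' : ¬ IsGradedRadicallyPrincipal 𝒜 I) : ∃ P, I ≤ P ∧
      Maximal (fun J : Ideal A => J.IsHomogeneous 𝒜 ∧ ¬ IsGradedRadicallyPrincipal 𝒜 J) P := by
  refine zorn_le_nonempty₀ _ (fun C hCS hC J hJ => ?_) I ⟨hI, hI'⟩
  refine ⟨sSup C, ⟨Ideal.IsHomogeneous.sSup fun K hK => (hCS hK).1, fun hsup => ?_⟩,
    fun _ => le_sSup⟩
  obtain ⟨c, hc, ⟨n, hn⟩, hsupc⟩ := (isGradedRadicallyPrincipal_iff 𝒜).1 hsup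
  obtain ⟨K, hKC, hnK⟩ := (Submodule.mem_sSup_of_directed ⟨J, hJ⟩ hC.directedOn).1 hn
  exact (hCS hKC).2 <| (isGradedRadicallyPrincipal_iff 𝒜).2
    ⟨c, hc, ⟨n, hnK⟩, (gradedRadical_mono 𝒜 (le_sSup hKC)).trans hsupc⟩

lemma isGradedPrime_of_maximal_not_isGradedRadicallyPrincipal {P : Ideal A}
    (hP : Maximal (fun J : Ideal A => J.IsHomogeneous 𝒜 ∧ ¬ IsGradedRadicallyPrincipal 𝒜 J) P) :
    IsGradedPrime 𝒜 P := by
  obtain ⟨hPhom, hPnot⟩ := hP.prop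
  have of_gt {J : Ideal A} (hJ : J.IsHomogeneous 𝒜) (hPJ : P < J) :
      IsGradedRadicallyPrincipal 𝒜 J := by
    by_contra h
    exact hP.not_prop_of_gt hPJ ⟨hJ, h⟩
  refine ⟨fun hP_top => hPnot (hP_top ▸ isGradedRadicallyPrincipal_top 𝒜), hPhom, ?_⟩
  intro x y hx hy hxy
  by_contra! hxyP
  have hy_span : (Ideal.span {y}).IsHomogeneous 𝒜 :=
    Ideal.homogeneous_span 𝒜 {y} (by simpa using hy)
  have hJ : IsGradedRadicallyPrincipal 𝒜 (P ⊔ Ideal.span {y}) :=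
    of_gt (hPhom.sup hy_span) <| lt_of_le_of_ne le_sup_left fun h =>
      hxyP.2 (h ▸ Ideal.mem_sup_right (Ideal.mem_span_singleton_self y))
  have hPK : P ≤ P.colon (Ideal.span {y}) :=
    fun p hp => Ideal.mem_colon_span_singleton.2 (P.mul_mem_right y hp)
  have hK : IsGradedRadicallyPrincipal 𝒜 (P.colon (Ideal.span {y})) :=
    of_gt (hPhom.colon_span_singleton 𝒜 hy) <| lt_of_le_of_ne hPK
      fun h => hxyP.1 (h ▸ Ideal.mem_colon_span_singleton.2 hxy)
  refine hPnot (hJ.of_mul_le hK ?_ le_sup_left hPK)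
  rw [Ideal.sup_mul, sup_le_iff, Ideal.span_singleton_mul_le_iff]
  exact ⟨Ideal.mul_le_left, fun z hz => mul_comm z y ▸ Ideal.mem_colon_span_singleton.1 hz⟩

end CohenTheorem

theorem stmt_7 (𝒜 : G → AddSubgroup A) [GradedRing 𝒜] :
    GradedRadicallyPrincipalRing 𝒜 ↔
      ∀ P : Ideal A, IsGradedPrime 𝒜 P → IsGradedRadicallyPrincipal 𝒜 P := by
  refine ⟨fun h P hP => h P hP.2.1, fun h I hI => ?_⟩
  by_contra hI'
  obtain ⟨P, -, hP⟩ := exists_maximal_not_isGradedRadicallyPrincipal hI hI'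
  exact hP.prop.2 (h P (isGradedPrime_of_maximal_not_isGradedRadicallyPrincipal hP))
end

section
/- Let R be a graded integral domain (a commutative G-graded ring with no nonzero homogeneous zero divisors). Then R is a graded field if and only if the polynomial ring R[X] (with its induced grading) is a graded radically principal ring. -/
open DirectSum

variable {G A : Type*} [AddGroup G] [DecidableEq G] [CommRing A]

/-!
If every nonzero homogeneous element of `A` is a unit, a nonzero homogeneous polynomial
`C a * X ^ k` is associated to `X ^ k`, so a graded ideal of `A[X]` is either `0` or generated
by the least power of `X` it contains; in particular it is principal with a homogeneous generator.

Conversely, for a nonzero homogeneous `x ∈ A`, let `c = C a * X ^ k` be a homogeneous element with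
the same graded radical as `(C x, X)`. A power of `X` is a multiple of `c`, so `a` is a unit; a
power of `C x` is a multiple of `c` and is a nonzero constant since `A` is a graded domain, so
`k = 0`. Hence `c` is a unit, `1 ∈ (C x, X)`, and evaluating at `X = 0` makes `x` a unit.
-/

open Polynomial

theorem mem_gradedRadical_iff_of_mem {𝒜 : G → AddSubgroup A} [GradedRing 𝒜] {J : Ideal A}
    {y : A} {i : G} (hy : y ∈ 𝒜 i) : y ∈ gradedRadical 𝒜 J ↔ ∃ n : ℕ, y ^ n ∈ J := by
  refine ⟨fun h => by simpa [decompose_of_mem_same 𝒜 hy] using h i, fun ⟨n, hn⟩ j => ?_⟩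
  by_cases hij : i = j
  · subst hij
    exact ⟨n, by rwa [decompose_of_mem_same 𝒜 hy]⟩
  · exact ⟨1, by simp [decompose_of_mem_ne 𝒜 hy hij]⟩

section

variable {ι R : Type*} [CommRing R]

theorem Ideal.IsHomogeneous.le_of_forall_isHomogeneousElem [DecidableEq ι] [AddMonoid ι]
    {𝒜 : ι → AddSubgroup R} [GradedRing 𝒜] {I J : Ideal R} (hI : I.IsHomogeneous 𝒜)
    (h : ∀ x ∈ I, SetLike.IsHomogeneousElem 𝒜 x → x ∈ J) : I ≤ J := by
  rw [← hI.toIdeal_homogeneousCore_eq_self]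
  refine Ideal.span_le.2 ?_
  rintro _ ⟨⟨x, hx⟩, hxI, rfl⟩
  exact h x hxI hx

theorem pow_ne_zero_of_isHomogeneousElem [AddMonoid ι] {𝒜 : ι → AddSubgroup R}
    [SetLike.GradedMonoid 𝒜]
    (hdom : ∀ x y : R, SetLike.IsHomogeneousElem 𝒜 x → SetLike.IsHomogeneousElem 𝒜 y →
      x * y = 0 → x = 0 ∨ y = 0)
    {x : R} (hx : SetLike.IsHomogeneousElem 𝒜 x) (hx0 : x ≠ 0) (n : ℕ) : x ^ n ≠ 0 := by
  induction n with
  | zero => exact fun h => hx0 (by rw [← mul_one x, ← pow_zero x, h, mul_zero])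
  | succ n ih =>
    rw [pow_succ]
    exact fun h => (hdom _ _ ((SetLike.homogeneousSubmonoid 𝒜).pow_mem hx n) hx h).elim ih hx0

variable {𝒜 : ι → AddSubgroup R} {ℬ : ι × ℤ → AddSubgroup R[X]}

theorem C_mul_X_pow_mem
    (hℬ : ∀ (g : ι) (n : ℕ), (ℬ (g, (n : ℤ)) : Set R[X]) = {p | ∃ a ∈ 𝒜 g, p = C a * X ^ n})
    {a : R} {g : ι} (ha : a ∈ 𝒜 g) (n : ℕ) : C a * X ^ n ∈ ℬ (g, n) := by
  rw [← SetLike.mem_coe, hℬ]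
  exact ⟨a, ha, rfl⟩

theorem C_mem
    (hℬ : ∀ (g : ι) (n : ℕ), (ℬ (g, (n : ℤ)) : Set R[X]) = {p | ∃ a ∈ 𝒜 g, p = C a * X ^ n})
    {a : R} {g : ι} (ha : a ∈ 𝒜 g) : C a ∈ ℬ (g, 0) := by
  simpa using C_mul_X_pow_mem hℬ ha 0

theorem X_pow_mem [Zero ι] [SetLike.GradedOne 𝒜]
    (hℬ : ∀ (g : ι) (n : ℕ), (ℬ (g, (n : ℤ)) : Set R[X]) = {p | ∃ a ∈ 𝒜 g, p = C a * X ^ n})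
    (n : ℕ) : (X : R[X]) ^ n ∈ ℬ (0, n) := by
  simpa using C_mul_X_pow_mem hℬ SetLike.GradedOne.one_mem n

theorem exists_eq_C_mul_X_pow_of_mem
    (hℬ : ∀ (g : ι) (n : ℕ), (ℬ (g, (n : ℤ)) : Set R[X]) = {p | ∃ a ∈ 𝒜 g, p = C a * X ^ n})
    (hℬneg : ∀ (g : ι) (n : ℤ), n < 0 → ℬ (g, n) = ⊥) {p : R[X]} {γ : ι × ℤ} (hp : p ∈ ℬ γ) :
    ∃ a ∈ 𝒜 γ.1, ∃ k : ℕ, p = C a * X ^ k := by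
  obtain ⟨g, m⟩ := γ
  rcases lt_or_ge m 0 with hm | hm
  · rw [hℬneg g m hm, AddSubgroup.mem_bot] at hp
    exact ⟨0, zero_mem _, 0, by simp [hp]⟩
  · lift m to ℕ using hm
    rw [← SetLike.mem_coe, hℬ] at hp
    obtain ⟨a, ha, rfl⟩ := hp
    exact ⟨a, ha, m, rfl⟩

theorem eq_zero_or_associated_X_pow_of_isHomogeneousElem
    (hfield : ∀ x : R, SetLike.IsHomogeneousElem 𝒜 x → x ≠ 0 → IsUnit x)
    (hℬ : ∀ (g : ι) (n : ℕ), (ℬ (g, (n : ℤ)) : Set R[X]) = {p | ∃ a ∈ 𝒜 g, p = C a * X ^ n})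
    (hℬneg : ∀ (g : ι) (n : ℤ), n < 0 → ℬ (g, n) = ⊥) {p : R[X]}
    (hp : SetLike.IsHomogeneousElem ℬ p) : p = 0 ∨ ∃ k : ℕ, Associated (X ^ k) p := by
  obtain ⟨γ, hγ⟩ := hp
  obtain ⟨a, ha, k, rfl⟩ := exists_eq_C_mul_X_pow_of_mem hℬ hℬneg hγ
  rcases eq_or_ne a 0 with rfl | ha0
  · simp
  · exact .inr ⟨k, (associated_unit_mul_left _ _ ((hfield a ⟨_, ha⟩ ha0).map C)).symm⟩

theorem Ideal.IsHomogeneous.exists_eq_span_singleton [AddMonoid ι] [DecidableEq ι]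
    [SetLike.GradedOne 𝒜] [GradedRing ℬ]
    (hfield : ∀ x : R, SetLike.IsHomogeneousElem 𝒜 x → x ≠ 0 → IsUnit x)
    (hℬ : ∀ (g : ι) (n : ℕ), (ℬ (g, (n : ℤ)) : Set R[X]) = {p | ∃ a ∈ 𝒜 g, p = C a * X ^ n})
    (hℬneg : ∀ (g : ι) (n : ℤ), n < 0 → ℬ (g, n) = ⊥) {I : Ideal R[X]}
    (hI : I.IsHomogeneous ℬ) : ∃ c, SetLike.IsHomogeneousElem ℬ c ∧ I = Ideal.span {c} := by
  classical
  by_cases hX : ∃ n, (X : R[X]) ^ n ∈ I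
  · refine ⟨X ^ Nat.find hX, ⟨_, X_pow_mem hℬ _⟩,
      le_antisymm ?_ (Ideal.span_singleton_le_iff_mem _ |>.2 (Nat.find_spec hX))⟩
    refine hI.le_of_forall_isHomogeneousElem fun p hpI hp => ?_
    rcases eq_zero_or_associated_X_pow_of_isHomogeneousElem hfield hℬ hℬneg hp with rfl | ⟨k, hk⟩
    · exact zero_mem _
    · have hmk : Nat.find hX ≤ k := Nat.find_min' hX (I.mem_of_dvd hk.symm.dvd hpI)
      exact Ideal.mem_span_singleton.2 ((pow_dvd_pow X hmk).trans hk.dvd)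
  · refine ⟨0, ⟨0, zero_mem _⟩, ?_⟩
    rw [Ideal.span_singleton_eq_bot.2 rfl, eq_bot_iff]
    refine hI.le_of_forall_isHomogeneousElem fun p hpI hp => ?_
    rcases eq_zero_or_associated_X_pow_of_isHomogeneousElem hfield hℬ hℬneg hp with rfl | ⟨k, hk⟩
    · exact zero_mem _
    · exact absurd ⟨k, I.mem_of_dvd hk.symm.dvd hpI⟩ hX

theorem isHomogeneous_span_C_X [AddMonoid ι] [DecidableEq ι] [SetLike.GradedOne 𝒜]
    [GradedRing ℬ]
    (hℬ : ∀ (g : ι) (n : ℕ), (ℬ (g, (n : ℤ)) : Set R[X]) = {p | ∃ a ∈ 𝒜 g, p = C a * X ^ n})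
    {x : R} (hx : SetLike.IsHomogeneousElem 𝒜 x) :
    (Ideal.span {C x, X} : Ideal R[X]).IsHomogeneous ℬ := by
  obtain ⟨g, hg⟩ := hx
  refine Ideal.homogeneous_span _ _ ?_
  rintro p (rfl | rfl)
  · exact ⟨_, C_mem hℬ hg⟩
  · exact ⟨_, by simpa using X_pow_mem hℬ 1⟩

end

theorem isUnit_of_isGradedRadicallyPrincipal_span_C_X {𝒜 : G → AddSubgroup A} [GradedRing 𝒜]
    (hdom : ∀ x y : A, SetLike.IsHomogeneousElem 𝒜 x → SetLike.IsHomogeneousElem 𝒜 y →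
      x * y = 0 → x = 0 ∨ y = 0)
    {ℬ : G × ℤ → AddSubgroup A[X]} [GradedRing ℬ]
    (hℬ : ∀ (g : G) (n : ℕ), (ℬ (g, (n : ℤ)) : Set A[X]) = {p | ∃ a ∈ 𝒜 g, p = C a * X ^ n})
    (hℬneg : ∀ (g : G) (n : ℤ), n < 0 → ℬ (g, n) = ⊥) {x : A}
    (hx : SetLike.IsHomogeneousElem 𝒜 x) (hx0 : x ≠ 0)
    (h : IsGradedRadicallyPrincipal ℬ (Ideal.span {C x, X})) : IsUnit x := by
  obtain ⟨c, ⟨γ, hc⟩, hrad⟩ := h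
  obtain ⟨a, -, k, rfl⟩ := exists_eq_C_mul_X_pow_of_mem hℬ hℬneg hc
  have transfer : ∀ {y : A[X]} {i : G × ℤ}, y ∈ ℬ i →
      ((∃ n, y ^ n ∈ Ideal.span {C x, X}) ↔ ∃ n, y ^ n ∈ Ideal.span {C a * X ^ k}) :=
    fun hy => by rw [← mem_gradedRadical_iff_of_mem hy, ← mem_gradedRadical_iff_of_mem hy, hrad]
  have hXI : X ∈ Ideal.span {C x, X} := Ideal.subset_span (by simp)
  have hCI : C x ∈ Ideal.span {C x, X} := Ideal.subset_span (by simp)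
  obtain ⟨n, hXn⟩ := transfer (X_pow_mem hℬ 1) |>.1 ⟨1, by simpa using hXI⟩
  obtain ⟨g, hg⟩ := hx
  obtain ⟨m, hxm⟩ := transfer (C_mem hℬ hg) |>.1 ⟨1, by simpa using hCI⟩
  rw [Ideal.mem_span_singleton] at hXn hxm
  have ha : IsUnit a := isUnit_of_dvd_one <| by
    simpa using (C_dvd_iff_dvd_coeff _ _).1 ((dvd_mul_right _ _).trans hXn) n
  have hk : k = 0 := by
    by_contra hk
    have := X_pow_dvd_iff.1 ((dvd_mul_left _ _).trans hxm) 0 (Nat.pos_of_ne_zero hk)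
    simp only [← C_pow, coeff_C_zero] at this
    exact pow_ne_zero_of_isHomogeneousElem hdom ⟨g, hg⟩ hx0 m this
  subst hk
  obtain ⟨n, h1⟩ := transfer (SetLike.GradedOne.one_mem (A := ℬ)) |>.2
    ⟨1, by simp [Ideal.span_singleton_eq_top.2 (isUnit_C.2 ha)]⟩
  rw [one_pow, Ideal.mem_span_pair] at h1
  obtain ⟨u, v, huv⟩ := h1
  exact .of_mul_eq_one_right _ (by simpa using congrArg constantCoeff huv)

theorem stmt_16 (𝒜 : G → AddSubgroup A) [GradedRing 𝒜]
    (hdom : ∀ x y : A, SetLike.IsHomogeneousElem 𝒜 x → SetLike.IsHomogeneousElem 𝒜 y →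
      x * y = 0 → x = 0 ∨ y = 0)
    (ℬ : G × ℤ → AddSubgroup (Polynomial A)) [GradedRing ℬ]
    (hℬ : ∀ (g : G) (n : ℕ), (ℬ (g, (n : ℤ)) : Set (Polynomial A)) =
      {p | ∃ a ∈ 𝒜 g, p = Polynomial.C a * Polynomial.X ^ n})
    (hℬneg : ∀ (g : G) (n : ℤ), n < 0 → ℬ (g, n) = ⊥) :
    (∀ x : A, SetLike.IsHomogeneousElem 𝒜 x → x ≠ 0 → IsUnit x) ↔
      GradedRadicallyPrincipalRing ℬ := by
  constructor
  · intro hfield I hI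
    obtain ⟨c, hc, rfl⟩ := hI.exists_eq_span_singleton hfield hℬ hℬneg
    exact ⟨c, hc, rfl⟩
  · intro hRP x hx hx0
    exact isUnit_of_isGradedRadicallyPrincipal_span_C_X hdom hℬ hℬneg hx hx0
      (hRP _ (isHomogeneous_span_C_X hℬ hx))
end

section
/- Let R be a graded integral domain. If the polynomial ring R[X] is a graded radically principal ring, then R is first strongly graded. -/
open DirectSum Pointwise

variable {G A : Type*} [AddGroup G] [DecidableEq G] [CommRing A]

/-!
Take `a ≠ 0` homogeneous of degree `g` and apply the hypothesis to the graded ideal `I = (a, X)`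
of `R[X]`: `Grad(I) = Grad(c)` with `c = b Xᵐ` homogeneous. Since `X ∈ Grad(c)`, `c` divides a power
of `X`, so `b` is a unit; since `a ∈ Grad(c)` and `aᵏ ≠ 0`, `c` divides a nonzero constant, so
`m = 0`. Thus `c` is a unit, `1 ∈ Grad(I)`, hence `I = R[X]` and `a` is a unit of `R`; the degree
`-g` component of its inverse is again an inverse.
-/

open Polynomial

section GradedRing

variable (𝒜 : G → AddSubgroup A) [GradedRing 𝒜]

theorem mem_gradedRadical_of_mem {I : Ideal A} {x : A} {i : G} (hx : x ∈ 𝒜 i) (hxI : x ∈ I) :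
    x ∈ gradedRadical 𝒜 I := by
  intro j
  by_cases hij : i = j
  · exact ⟨1, by rw [decompose_of_mem_same 𝒜 (hij ▸ hx), pow_one]; exact hxI⟩
  · exact ⟨1, by rw [decompose_of_mem_ne 𝒜 hx hij, pow_one]; exact I.zero_mem⟩

theorem exists_pow_mem_of_mem_gradedRadical {I : Ideal A} {x : A} {i : G} (hx : x ∈ 𝒜 i)
    (hxI : x ∈ gradedRadical 𝒜 I) : ∃ n : ℕ, x ^ n ∈ I := by
  obtain ⟨n, hn⟩ := hxI i
  exact ⟨n, by rwa [decompose_of_mem_same 𝒜 hx] at hn⟩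

theorem gradedRadical_top : gradedRadical 𝒜 (⊤ : Ideal A) = Set.univ :=
  Set.eq_univ_of_forall fun _ _ => ⟨0, Submodule.mem_top⟩

theorem Ideal.eq_top_of_one_mem_gradedRadical {I : Ideal A} (h : 1 ∈ gradedRadical 𝒜 I) :
    I = ⊤ := by
  obtain ⟨n, hn⟩ := exists_pow_mem_of_mem_gradedRadical 𝒜 SetLike.GradedOne.one_mem h
  rw [one_pow] at hn
  exact (Ideal.eq_top_iff_one I).mpr hn

theorem exists_dvd_pow_of_gradedRadical_eq_span_singleton {I : Ideal A} {c x : A} {i : G}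
    (hIc : gradedRadical 𝒜 I = gradedRadical 𝒜 (Ideal.span {c})) (hx : x ∈ 𝒜 i) (hxI : x ∈ I) :
    ∃ n : ℕ, c ∣ x ^ n := by
  have hx' := mem_gradedRadical_of_mem 𝒜 hx hxI
  rw [hIc] at hx'
  simpa only [Ideal.mem_span_singleton] using exists_pow_mem_of_mem_gradedRadical 𝒜 hx hx'

theorem mul_decompose_neg_eq_one {a v : A} {g : G} (ha : a ∈ 𝒜 g) (hav : a * v = 1) :
    a * (decompose 𝒜 v (-g) : A) = 1 := by
  have key := coe_decompose_mul_add_of_left_mem 𝒜 (j := -g) ha (b := v)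
  rwa [hav, add_neg_cancel, decompose_of_mem_same 𝒜 SetLike.GradedOne.one_mem, eq_comm] at key

theorem pow_ne_zero_of_mem_of_homogeneous_noZeroDivisors
    (hdom : ∀ x y : A, SetLike.IsHomogeneousElem 𝒜 x → SetLike.IsHomogeneousElem 𝒜 y →
      x * y = 0 → x = 0 ∨ y = 0)
    {a : A} {g : G} (ha : a ∈ 𝒜 g) (ha0 : a ≠ 0) (k : ℕ) : a ^ k ≠ 0 := by
  have : Nontrivial A := nontrivial_of_ne a 0 ha0
  induction k with
  | zero => exact pow_zero a ▸ one_ne_zero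
  | succ k ih =>
    rw [pow_succ]
    intro hz
    rcases hdom _ _ ⟨k • g, SetLike.pow_mem_graded k ha⟩ ⟨g, ha⟩ hz with h | h
    exacts [ih h, ha0 h]

end GradedRing

theorem Polynomial.isUnit_of_span_C_X_eq_top {R : Type*} [CommRing R] {a : R}
    (h : Ideal.span {C a, (X : R[X])} = ⊤) : IsUnit a := by
  obtain ⟨p, q, hpq⟩ := Ideal.mem_span_pair.mp ((Ideal.eq_top_iff_one _).mp h)
  have h0 := congrArg (coeff · 0) hpq
  simp only [coeff_add, coeff_mul_C, coeff_mul_X_zero, add_zero, coeff_one_zero] at h0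
  exact IsUnit.of_mul_eq_one_right _ h0

theorem Polynomial.isUnit_C_mul_X_pow_of_dvd {R : Type*} [CommSemiring R] {b r : R} {m n : ℕ}
    (hX : C b * X ^ m ∣ X ^ n) (hr : C b * X ^ m ∣ C r) (hr0 : r ≠ 0) :
    IsUnit (C b * X ^ m) := by
  obtain rfl : m = 0 := by
    by_contra hm
    have hXr : X ∣ C r := (dvd_pow_self X hm).trans ((dvd_mul_left _ _).trans hr)
    exact hr0 (by simpa using X_dvd_iff.mp hXr)
  rw [pow_zero, mul_one] at hX ⊢
  have hb : b ∣ (X ^ n : R[X]).coeff n := (C_dvd_iff_dvd_coeff b _).mp hX n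
  rw [coeff_X_pow_self] at hb
  exact isUnit_C.mpr (isUnit_of_dvd_one hb)

theorem exists_eq_C_mul_X_pow_of_isHomogeneousElem {ι R : Type*} [CommRing R]
    (𝒜 : ι → AddSubgroup R) (ℬ : ι × ℤ → AddSubgroup R[X])
    (hℬ : ∀ (g : ι) (n : ℕ), (ℬ (g, (n : ℤ)) : Set R[X]) = {p | ∃ a ∈ 𝒜 g, p = C a * X ^ n})
    (hℬneg : ∀ (g : ι) (n : ℤ), n < 0 → ℬ (g, n) = ⊥)
    {c : R[X]} (hc : SetLike.IsHomogeneousElem ℬ c) (hc0 : c ≠ 0) :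
    ∃ (b : R) (m : ℕ), c = C b * X ^ m := by
  obtain ⟨⟨h, m⟩, hc⟩ := hc
  have hm : 0 ≤ m := not_lt.mp fun hm => hc0 (by simpa [hℬneg h m hm] using hc)
  lift m to ℕ using hm
  rw [← SetLike.mem_coe, hℬ] at hc
  obtain ⟨b, -, rfl⟩ := hc
  exact ⟨b, m, rfl⟩

theorem stmt_18 (𝒜 : G → AddSubgroup A) [GradedRing 𝒜]
    (hdom : ∀ x y : A, SetLike.IsHomogeneousElem 𝒜 x → SetLike.IsHomogeneousElem 𝒜 y →
      x * y = 0 → x = 0 ∨ y = 0)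
    (ℬ : G × ℤ → AddSubgroup (Polynomial A)) [GradedRing ℬ]
    (hℬ : ∀ (g : G) (n : ℕ), (ℬ (g, (n : ℤ)) : Set (Polynomial A)) =
      {p | ∃ a ∈ 𝒜 g, p = Polynomial.C a * Polynomial.X ^ n})
    (hℬneg : ∀ (g : G) (n : ℤ), n < 0 → ℬ (g, n) = ⊥)
    (hRP : GradedRadicallyPrincipalRing ℬ) :
    ∀ g : G, 𝒜 g ≠ ⊥ → (1 : A) ∈ ((𝒜 g : Set A) * (𝒜 (-g) : Set A)) := by
  intro g hg
  obtain ⟨a, ha, ha0⟩ := (AddSubgroup.bot_or_exists_ne_zero _).resolve_left hg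
  have hCa : C a ∈ ℬ (g, 0) := by
    rw [← SetLike.mem_coe, ← Nat.cast_zero, hℬ]
    exact ⟨a, ha, by simp⟩
  have hX : X ∈ ℬ (0, 1) := by
    rw [← SetLike.mem_coe, ← Nat.cast_one, hℬ]
    exact ⟨1, SetLike.GradedOne.one_mem, by simp⟩
  set I : Ideal A[X] := Ideal.span {C a, X}
  have hI : I.IsHomogeneous ℬ := Ideal.homogeneous_span ℬ _ <| by
    rintro x (rfl | rfl)
    exacts [⟨_, hCa⟩, ⟨_, hX⟩]
  obtain ⟨c, hc, hIc⟩ := hRP I hI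
  obtain ⟨n, hXn⟩ := exists_dvd_pow_of_gradedRadical_eq_span_singleton ℬ hIc hX
    (Ideal.subset_span (by simp))
  obtain ⟨k, hCak⟩ := exists_dvd_pow_of_gradedRadical_eq_span_singleton ℬ hIc hCa
    (Ideal.subset_span (by simp))
  rw [← C_pow] at hCak
  have hak := pow_ne_zero_of_mem_of_homogeneous_noZeroDivisors 𝒜 hdom ha ha0 k
  obtain ⟨b, m, rfl⟩ := exists_eq_C_mul_X_pow_of_isHomogeneousElem 𝒜 ℬ hℬ hℬneg hc
    (fun h0 => hak (C_eq_zero.mp (zero_dvd_iff.mp (h0 ▸ hCak))))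
  have hunit := isUnit_C_mul_X_pow_of_dvd hXn hCak hak
  have hItop : I = ⊤ := Ideal.eq_top_of_one_mem_gradedRadical ℬ <| by
    rw [hIc, Ideal.span_singleton_eq_top.mpr hunit, gradedRadical_top]
    trivial
  obtain ⟨s, has⟩ := (isUnit_of_span_C_X_eq_top hItop).exists_right_inv
  exact ⟨a, ha, _, SetLike.coe_mem _, mul_decompose_neg_eq_one 𝒜 ha has⟩
end
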